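/- Let I be a monomial ideal of Borel type in S = k[x_1,...,x_n] with sequential chain I = I_0 ⊆ I_1 ⊆ ... ⊆ I_r = S defined by I_{l+1} = I_l : x_{n_l}^∞ where n_l = m(I_l). Then r ≤ n and n ≥ n_0 > n_1 > ... > n_{r−1}, and the set of associated primes of S/I is exactly { (x_1,...,x_{n_l}) : l = 0,...,r−1 }. -/

import Mathlib

open MvPolynomial DirectSum

noncomputable section




variable {k : Type} [Field k] {n : ℕ}

/-- The maximal graded ideal `(x_1, …, x_n)` of `k[x_1,…,x_n]`. -/
def maxIdeal (k : Type) [Field k] (n : ℕ) : Ideal (MvPolynomial (Fin n) k) :=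
  Ideal.span (Set.range X)

/-- The "infinite colon" `I : J^∞ = ⋃_t (I : J^t)`. -/
def infColon (I J : Ideal (MvPolynomial (Fin n) k)) : Ideal (MvPolynomial (Fin n) k) :=
  ⨆ t : ℕ, Submodule.colon I ↑(J ^ t)

/-- The saturation `I^{sat} = I : m^∞`. -/
def satur (I : Ideal (MvPolynomial (Fin n) k)) : Ideal (MvPolynomial (Fin n) k) :=
  infColon I (maxIdeal k n)

/-- A monomial ideal: an ideal generated by monomials. -/
def IsMonomialIdeal (I : Ideal (MvPolynomial (Fin n) k)) : Prop :=
  ∃ A : Set (Fin n →₀ ℕ), I = Ideal.span ((fun u => monomial u (1 : k)) '' A)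

/-- `I` is of Borel type: `I : (x_1,…,x_i)^∞ = I : x_i^∞` for all `i`. -/
def IsBorelType (I : Ideal (MvPolynomial (Fin n) k)) : Prop :=
  ∀ i : Fin n,
    infColon I (Ideal.span {f | ∃ j ≤ i, f = X j}) = infColon I (Ideal.span {X i})

/-- Total degree of an exponent vector. -/
def expDeg (u : Fin n →₀ ℕ) : ℕ := u.sum fun _ e => e

/-- The truncated ideal `I_{≥ e}`, generated by all monomials of degree `≥ e` lying in `I`. -/
def truncGE (I : Ideal (MvPolynomial (Fin n) k)) (e : ℕ) : Ideal (MvPolynomial (Fin n) k) :=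
  Ideal.span {f | ∃ u : Fin n →₀ ℕ, monomial u (1 : k) ∈ I ∧ e ≤ expDeg u ∧ f = monomial u (1 : k)}

/-- A stable monomial ideal: for every monomial `x^u ∈ I` with largest variable `x_j`
dividing it and every `i < j`, also `x_i x^u / x_j ∈ I`. -/
def IsStable (I : Ideal (MvPolynomial (Fin n) k)) : Prop :=
  ∀ u : Fin n →₀ ℕ, monomial u (1 : k) ∈ I →
    ∀ j : Fin n, j ∈ u.support → (∀ l ∈ u.support, l ≤ j) →
      ∀ i : Fin n, i < j →
        monomial (u - Finsupp.single j 1 + Finsupp.single i 1) (1 : k) ∈ I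

/-- The set of (exponent vectors of) minimal monomial generators of a monomial ideal. -/
def minGens (I : Ideal (MvPolynomial (Fin n) k)) : Set (Fin n →₀ ℕ) :=
  {u | monomial u (1 : k) ∈ I ∧ ∀ v : Fin n →₀ ℕ, monomial v (1 : k) ∈ I → v ≤ u → v = u}

/-- The irreducible monomial ideal `m^b = (x_i^{b_i} : b_i ≥ 1)`. -/
def irredPow (k : Type) [Field k] {n : ℕ} (b : Fin n →₀ ℕ) : Ideal (MvPolynomial (Fin n) k) :=
  Ideal.span {f | ∃ i : Fin n, 1 ≤ b i ∧ f = (X i : MvPolynomial (Fin n) k) ^ b i}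





/-- The product of the variables indexed by `F`. -/
def varProd (k : Type) [Field k] {n : ℕ} (F : Finset (Fin n)) : MvPolynomial (Fin n) k :=
  ∏ i ∈ F, X i

variable (M : Type) [AddCommGroup M] [Module (MvPolynomial (Fin n) k) M]

variable (k) in
/-- The localization of `M` at the product of the variables indexed by `F`. -/
abbrev locAt' (F : Finset (Fin n)) : Type :=
  LocalizedModule (Submonoid.powers (varProd k F)) M

variable (k n) in
/-- The `p`-th term of the Čech complex. -/
abbrev cechC (p : ℕ) : Type :=
  DirectSum {F : Finset (Fin n) // F.card = p} (fun F => locAt' k M F.1)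

lemma commute_aux {A : Type} [Ring A] {a b : A} (h : Commute a b) (hu : IsUnit (a * b)) :
    IsUnit a := by
  refine isUnit_iff_exists.mpr ⟨b * ↑hu.unit⁻¹, ?_, ?_⟩
  · rw [← mul_assoc]
    simpa using hu.unit.mul_inv
  · have hc : Commute a (↑hu.unit : A) := by
      have : (↑hu.unit : A) = a * b := hu.unit_spec
      rw [this]
      exact (Commute.refl a).mul_right h
    have hc' : Commute a (↑hu.unit⁻¹ : A) := hc.units_inv_right
    calc b * ↑hu.unit⁻¹ * a = b * (a * ↑hu.unit⁻¹) := by rw [mul_assoc, hc'.eq]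
    _ = (a * b) * ↑hu.unit⁻¹ := by rw [← mul_assoc]; exact congrArg (· * _) h.eq.symm
    _ = 1 := by simpa using hu.unit.mul_inv

lemma isUnit_algebraMap_end (u v w : MvPolynomial (Fin n) k) (hw : w = u * v)
    (s : Submonoid.powers u) :
    IsUnit ((algebraMap (MvPolynomial (Fin n) k)
      (Module.End (MvPolynomial (Fin n) k)
        (LocalizedModule (Submonoid.powers w) M))) s) := by
  subst hw
  obtain ⟨t, ht⟩ := s.2
  have h1 : IsUnit ((algebraMap (MvPolynomial (Fin n) k)
      (Module.End (MvPolynomial (Fin n) k)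
        (LocalizedModule (Submonoid.powers (u * v)) M))) ((u * v) ^ t)) :=
    IsLocalizedModule.map_units
      (LocalizedModule.mkLinearMap (Submonoid.powers (u * v)) M)
      (⟨(u * v) ^ t, ⟨t, rfl⟩⟩ : Submonoid.powers (u * v))
  have h2 : (u * v) ^ t = (s : MvPolynomial (Fin n) k) * v ^ t := by
    rw [mul_pow]; simp only [ht]
  rw [h2, map_mul] at h1
  exact commute_aux ((Commute.all _ _).map _) h1

/-- The canonical map between localizations of `M` for `F ⊆ G`. -/
def locMap (F G : Finset (Fin n)) (h : F ⊆ G) :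
    locAt' k M F →ₗ[MvPolynomial (Fin n) k] locAt' k M G := by
  refine LocalizedModule.lift _
    (LocalizedModule.mkLinearMap (Submonoid.powers (varProd k G)) M) ?_
  intro s
  have hFG : varProd k G = varProd k F * varProd k (G \ F) := by
    rw [varProd, varProd, varProd, ← Finset.prod_sdiff h, mul_comm]
  exact isUnit_algebraMap_end M _ _ _ hFG s

set_option maxHeartbeats 1000000 in
variable (k n) in
/-- The Čech differential. -/
def cechD (p : ℕ) : cechC k n M p →ₗ[MvPolynomial (Fin n) k] cechC k n M (p + 1) :=
  DirectSum.toModule (MvPolynomial (Fin n) k) _ (cechC k n M (p + 1)) (fun F =>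
    ∑ j : Fin n,
      if h : j ∈ F.1 then 0 else
        ((-1 : ℤ) ^ ((F.1.filter (· < j)).card)) •
          ((DirectSum.lof (MvPolynomial (Fin n) k) {G : Finset (Fin n) // G.card = p + 1}
              (fun G => locAt' k M G.1)
              ⟨insert j F.1, by rw [Finset.card_insert_of_notMem h, F.2]⟩).comp
            (locMap M F.1 (insert j F.1) (Finset.subset_insert _ _))))


variable (k n) in
/-- The cocycles at Čech degree `p`, as an additive subgroup. -/
def cechZ (p : ℕ) : AddSubgroup (cechC k n M p) :=
  AddMonoidHom.ker (cechD k n M p).toAddMonoidHom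

variable (k n) in
/-- The coboundaries at Čech degree `p`, as an additive subgroup. -/
def cechB (p : ℕ) : AddSubgroup (cechC k n M p) :=
  Nat.casesOn (motive := fun p => AddSubgroup (cechC k n M p)) p ⊥
    (fun q => AddMonoidHom.range (G := cechC k n M q) (N := cechC k n M (q + 1))
      ((cechD k n M q).toAddMonoidHom))

variable (k n) in
/-- The `p`-th (Čech) local cohomology of `M` with respect to the maximal graded
ideal: cocycles modulo coboundaries. -/
abbrev cechH (p : ℕ) : Type :=
  (cechZ k n M p) ⧸ ((cechB k n M p).addSubgroupOf (cechZ k n M p))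

variable (dg : ℤ → AddSubgroup M)

/-- The degree-`j` part of the localization of `M` at `x_F`, induced by a grading `dg`
of `M`: it is generated by the fractions `m / x_F^t` with `m` homogeneous of degree
`j + t·|F|`. -/
def locDeg (F : Finset (Fin n)) (j : ℤ) : AddSubgroup (locAt' k M F) :=
  AddSubgroup.closure
    {z | ∃ (t : ℕ) (m : M), m ∈ dg (j + t * F.card) ∧
      z = LocalizedModule.mk m (⟨varProd k F ^ t, ⟨t, rfl⟩⟩ : Submonoid.powers (varProd k F))}

variable (k n) in
/-- The degree-`j` part of the `p`-th Čech term. -/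
def cechDeg (p : ℕ) (j : ℤ) : AddSubgroup (cechC k n M p) where
  carrier := {x | ∀ F, x F ∈ locDeg M dg F.1 j}
  zero_mem' := by intro F; rw [DirectSum.zero_apply]; exact zero_mem _
  add_mem' := by intro a b ha hb F; rw [DirectSum.add_apply]; exact add_mem (ha F) (hb F)
  neg_mem' := by intro a ha F; rw [DFinsupp.neg_apply]; exact neg_mem (ha F)

variable (k n) in
/-- The degree-`j` part of the `p`-th local cohomology of `M`. -/
def cechHdeg (p : ℕ) (j : ℤ) : AddSubgroup (cechH k n M p) :=
  AddSubgroup.map (QuotientAddGroup.mk' ((cechB k n M p).addSubgroupOf (cechZ k n M p)))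
    ((cechDeg k n M dg p j).comap (cechZ k n M p).subtype)

variable (k n) in
/-- `a_i(M) = max{ j : H_m^i(M)_j ≠ 0 }`, as an extended real (`⊥ = -∞` if the
local cohomology vanishes). -/
def aInv (i : ℕ) : EReal :=
  sSup {x : EReal | ∃ j : ℤ, cechHdeg k n M dg i j ≠ ⊥ ∧ x = ((j : ℝ) : EReal)}

variable (k n) in
/-- The partial regularity `reg_t(M) = max{ a_i(M) + i : i ≤ t }`. -/
def regT (t : ℕ) : EReal :=
  sSup {x : EReal | ∃ i ≤ t, x = aInv k n M dg i + ((i : ℝ) : EReal)}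

variable (k n) in
/-- `a*_t(M) = max{ a_i(M) : i ≤ t }`. -/
def aStarT (t : ℕ) : EReal :=
  sSup {x : EReal | ∃ i ≤ t, x = aInv k n M dg i}

variable (k n) in
/-- The Castelnuovo–Mumford regularity `reg M = max_i { a_i(M) + i }`. -/
def cmReg : EReal :=
  sSup {x : EReal | ∃ i : ℕ, x = aInv k n M dg i + ((i : ℝ) : EReal)}

variable (k n) in
/-- The `a^*`-invariant `a^*(M) = max_i a_i(M)`. -/
def aStar : EReal :=
  sSup {x : EReal | ∃ i : ℕ, x = aInv k n M dg i}

/-- The canonical grading of a quotient `S/I` by a homogeneous ideal. -/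
def quotDeg (I : Ideal (MvPolynomial (Fin n) k)) (j : ℤ) :
    AddSubgroup ((MvPolynomial (Fin n) k) ⧸ I) :=
  if 0 ≤ j then
    AddSubgroup.map (Ideal.Quotient.mk I).toAddMonoidHom
      ((homogeneousSubmodule (Fin n) k j.toNat).toAddSubgroup)
  else ⊥

/-- The canonical grading of a homogeneous ideal `I ⊆ S`, viewed as an `S`-module. -/
def idealDeg (I : Ideal (MvPolynomial (Fin n) k)) (j : ℤ) : AddSubgroup I :=
  if 0 ≤ j then
    AddSubgroup.comap (Submodule.subtype I).toAddMonoidHom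
      ((homogeneousSubmodule (Fin n) k j.toNat).toAddSubgroup)
  else ⊥

variable (k n) in
/-- `a_i(S/I)` for a homogeneous ideal `I`. -/
def aQuot (I : Ideal (MvPolynomial (Fin n) k)) (i : ℕ) : EReal :=
  aInv k n ((MvPolynomial (Fin n) k) ⧸ I) (quotDeg I) i

variable (k n) in
/-- `a_i(I)` for a homogeneous ideal `I` viewed as a graded `S`-module. -/
def aIdealMod (I : Ideal (MvPolynomial (Fin n) k)) (i : ℕ) : EReal :=
  aInv k n I (idealDeg I) i


variable (k n) in
/-- `reg_t(S/I)` for a homogeneous ideal `I`. -/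
def regTQuot (I : Ideal (MvPolynomial (Fin n) k)) (t : ℕ) : EReal :=
  regT k n ((MvPolynomial (Fin n) k) ⧸ I) (quotDeg I) t

variable (k n) in
/-- `a*_t(S/I)` for a homogeneous ideal `I`. -/
def aStarTQuot (I : Ideal (MvPolynomial (Fin n) k)) (t : ℕ) : EReal :=
  aStarT k n ((MvPolynomial (Fin n) k) ⧸ I) (quotDeg I) t

variable (k n) in
/-- `reg(S/I)` for a homogeneous ideal `I`. -/
def cmRegQuot (I : Ideal (MvPolynomial (Fin n) k)) : EReal :=
  cmReg k n ((MvPolynomial (Fin n) k) ⧸ I) (quotDeg I)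

variable (k n) in
/-- `a^*(S/I)` for a homogeneous ideal `I`. -/
def aStarQuot (I : Ideal (MvPolynomial (Fin n) k)) : EReal :=
  aStar k n ((MvPolynomial (Fin n) k) ⧸ I) (quotDeg I)

variable (k n) in
/-- `reg_t(I)` for a homogeneous ideal `I` viewed as a graded module. -/
def regTIdeal (I : Ideal (MvPolynomial (Fin n) k)) (t : ℕ) : EReal :=
  regT k n I (idealDeg I) t

variable (k n) in
/-- `a*_t(I)` for a homogeneous ideal `I` viewed as a graded module. -/
def aStarTIdeal (I : Ideal (MvPolynomial (Fin n) k)) (t : ℕ) : EReal :=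
  aStarT k n I (idealDeg I) t

variable (k n) in
/-- `reg(I)`, the Castelnuovo–Mumford regularity of the ideal `I` as a graded module. -/
def cmRegIdeal (I : Ideal (MvPolynomial (Fin n) k)) : EReal :=
  cmReg k n I (idealDeg I)

variable (k n) in
/-- The depth of a module: the maximal length of a regular sequence contained in the
maximal graded ideal. -/
def moduleDepth (N : Type) [AddCommGroup N] [Module (MvPolynomial (Fin n) k) N] : ℕ :=
  sSup {d : ℕ | ∃ rs : List (MvPolynomial (Fin n) k), rs.length = d ∧
    (∀ r ∈ rs, r ∈ maxIdeal k n) ∧ RingTheory.Sequence.IsRegular N rs}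

variable (k n) in
/-- The (Krull) dimension of a module, i.e. of `S` modulo its annihilator. -/
def moduleDim (N : Type) [AddCommGroup N] [Module (MvPolynomial (Fin n) k) N] :
    WithBot ℕ∞ :=
  ringKrullDim ((MvPolynomial (Fin n) k) ⧸ Module.annihilator (MvPolynomial (Fin n) k) N)

variable (k n) in
/-- A Cohen–Macaulay module: zero, or of depth equal to its dimension. -/
def IsCMmod (N : Type) [AddCommGroup N] [Module (MvPolynomial (Fin n) k) N] : Prop :=
  Subsingleton N ∨ ((moduleDepth k n N : ℕ∞) : WithBot ℕ∞) = moduleDim k n N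

/-- The satiety `s(I^{sat}/I)`: the largest degree `j` with `(I^{sat}/I)_j ≠ 0`,
i.e. with `(I^{sat})_j ⊄ I_j`, as an extended real. -/
def satietyDeg {k : Type} [Field k] {n : ℕ} (I : Ideal (MvPolynomial (Fin n) k)) : EReal :=
  sSup {x : EReal | ∃ j : ℕ,
    (∃ f ∈ homogeneousSubmodule (Fin n) k j, f ∈ satur I ∧ f ∉ I) ∧ x = ((j : ℝ) : EReal)}

/-- Maximal degree of a minimal monomial generator. -/
def genDeg {k : Type} [Field k] {n : ℕ} (I : Ideal (MvPolynomial (Fin n) k)) : ℕ :=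
  sSup {d : ℕ | ∃ u ∈ minGens I, expDeg u = d}

/-- `m(u)`: the (1-based) largest index of a variable dividing the monomial `x^u`. -/
def mVal {n : ℕ} (u : Fin n →₀ ℕ) : ℕ :=
  u.support.sup (fun i => (i : ℕ) + 1)

variable (k n) in
/-- The degree-`t` part of a graded free module `⊕_j S(-d_j)`, realized as
`Fin r →₀ S`: the `j`-th coordinate must be homogeneous of degree `t - d j`. -/
def freeDeg (r : ℕ) (d : Fin r → ℤ) (t : ℤ) :
    AddSubgroup (Fin r →₀ MvPolynomial (Fin n) k) where
  carrier := {f | ∀ j : Fin r,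
    (0 ≤ t - d j → f j ∈ homogeneousSubmodule (Fin n) k (t - d j).toNat) ∧
    (t - d j < 0 → f j = 0)}
  zero_mem' := by
    intro j
    exact ⟨fun _ => by simp, fun _ => by simp⟩
  add_mem' := by
    intro a b ha hb j
    refine ⟨fun h => ?_, fun h => ?_⟩
    · simpa [Finsupp.add_apply] using add_mem ((ha j).1 h) ((hb j).1 h)
    · simp [Finsupp.add_apply, (ha j).2 h, (hb j).2 h]
  neg_mem' := by
    intro a ha j
    refine ⟨fun h => ?_, fun h => ?_⟩
    · simpa [Finsupp.neg_apply] using neg_mem ((ha j).1 h)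
    · simp [Finsupp.neg_apply, (ha j).2 h]

/-- A minimal graded free resolution
`0 → F_s → ⋯ → F_1 → F_0 → M → 0` of a graded module `M` (with grading `dg`),
where `F_i` is free with `rk i` generators of degrees `dgen i j`. -/
structure MinimalGradedFreeRes (dg : ℤ → AddSubgroup M) where
  /-- length of the resolution -/
  s : ℕ
  /-- ranks of the free modules -/
  rk : ℕ → ℕ
  /-- degrees of the generators -/
  dgen : (i : ℕ) → Fin (rk i) → ℤ
  /-- the differentials `F_{i+1} → F_i` -/
  φ : (i : ℕ) → (Fin (rk (i + 1)) →₀ MvPolynomial (Fin n) k) →ₗ[MvPolynomial (Fin n) k]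
      (Fin (rk i) →₀ MvPolynomial (Fin n) k)
  /-- the augmentation `F_0 → M` -/
  ε : (Fin (rk 0) →₀ MvPolynomial (Fin n) k) →ₗ[MvPolynomial (Fin n) k] M
  rk_eq_zero : ∀ i, s < i → rk i = 0
  ε_surj : Function.Surjective ε
  ε_graded : ∀ (t : ℤ) x, x ∈ freeDeg k n (rk 0) (dgen 0) t → ε x ∈ dg t
  φ_graded : ∀ (i : ℕ) (t : ℤ) x, x ∈ freeDeg k n (rk (i + 1)) (dgen (i + 1)) t →
    φ i x ∈ freeDeg k n (rk i) (dgen i) t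
  exact_aug : LinearMap.ker ε = LinearMap.range (φ 0)
  exact_mid : ∀ i : ℕ, LinearMap.ker (φ i) = LinearMap.range (φ (i + 1))
  minimal : ∀ (i : ℕ) x (j : Fin (rk i)), (φ i x) j ∈ maxIdeal k n

/-!
Write `P_m = (x_1, …, x_m)`. Colon by `x_j^∞` erases `x_j` from the generators of a monomial
ideal, and iterated colons by powers of ideals commute, so every `I_l` is a monomial ideal of
Borel type whose minimal generators are among those of `I_{l-1}` with `x_{n_{l-1}}` erased; hence
`n_l < n_{l-1}`, and `r ≤ n`.

Borel type gives `I_{l+1} = I_l : P_{n_l}^∞`. Since `I_l` is generated by monomials in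
`x_1, …, x_{n_l}`, every element outside `P_{n_l}` is a nonzerodivisor on `S/I_l` (compare lowest
components for the degree in these variables), so `P_{n_l}` is the only associated prime of the
nonzero module `I_{l+1}/I_l`. The exact sequences `0 → I_{l+1}/I_l → S/I_l → S/I_{l+1} → 0`
give `Ass(S/I) ⊆ {P_{n_l} : l < r}` and `P_{n_l} ∈ Ass(S/I_l)`. Finally `I_l ⊆ I : y^∞` for
`y = x_{n_0} ⋯ x_{n_{l-1}} ∉ P_{n_l}`, which carries `P_{n_l}` from `Ass(S/I_l)` to `Ass(S/I)`.
-/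

section MonomialSpan

variable {σ R : Type*} [CommSemiring R]

variable (R) in
def monomialSpan (A : Set (σ →₀ ℕ)) : Ideal (MvPolynomial σ R) :=
  Ideal.span ((fun u => monomial u (1 : R)) '' A)

theorem mem_monomialSpan {A : Set (σ →₀ ℕ)} {f : MvPolynomial σ R} :
    f ∈ monomialSpan R A ↔ ∀ u ∈ f.support, ∃ a ∈ A, a ≤ u :=
  mem_ideal_span_monomial_image

theorem monomial_mem_monomialSpan [Nontrivial R] {A : Set (σ →₀ ℕ)} {u : σ →₀ ℕ} :
    monomial u (1 : R) ∈ monomialSpan R A ↔ ∃ a ∈ A, a ≤ u := by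
  classical
  simp [mem_monomialSpan, support_monomial]

theorem mem_monomialSpan_of_support_subset {A : Set (σ →₀ ℕ)} {f g : MvPolynomial σ R}
    (hgf : g.support ⊆ f.support) (hf : f ∈ monomialSpan R A) : g ∈ monomialSpan R A :=
  mem_monomialSpan.mpr fun u hu => mem_monomialSpan.mp hf u (hgf hu)

theorem span_X_image_eq_monomialSpan (s : Set σ) :
    Ideal.span (X '' s : Set (MvPolynomial σ R)) =
      monomialSpan R ((fun i => Finsupp.single i 1) '' s) := by
  rw [monomialSpan, Set.image_image]
  rfl

theorem X_mem_span_X_image_iff [Nontrivial R] {s : Set σ} {i : σ} :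
    (X i : MvPolynomial σ R) ∈ Ideal.span (X '' s) ↔ i ∈ s := by
  classical
  simp [mem_ideal_span_X_image, support_X, Finsupp.single_apply]

end MonomialSpan

section WeightedComponents

variable {σ R : Type*} [CommSemiring R] {s : Set σ}

theorem weight_indicator_eq_zero_iff {u : σ →₀ ℕ} :
    Finsupp.weight (s.indicator 1) u = 0 ↔ ∀ i ∈ s, u i = 0 := by
  classical
  rw [Finsupp.weight_apply, Finsupp.sum, Finset.sum_eq_zero_iff]
  refine ⟨fun h i hi => ?_, fun h i hi => ?_⟩
  · by_contra hu
    simpa [hi, hu] using h i (Finsupp.mem_support_iff.mpr hu)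
  · by_cases his : i ∈ s <;> simp [his, h]

theorem mem_span_X_image_iff_weightedHomogeneousComponent_eq_zero {f : MvPolynomial σ R} :
    f ∈ Ideal.span (X '' s) ↔ weightedHomogeneousComponent (s.indicator 1) 0 f = 0 := by
  classical
  rw [mem_ideal_span_X_image, ← support_eq_empty, support_weightedHomogeneousComponent,
    Finset.filter_eq_empty_iff]
  simp only [weight_indicator_eq_zero_iff, not_forall, exists_prop]

theorem weightedHomogeneousComponent_mul_of_le_weight (w : σ → ℕ) (f : MvPolynomial σ R)
    {g : MvPolynomial σ R} {d : ℕ} (hg : ∀ u ∈ g.support, d ≤ Finsupp.weight w u) :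
    weightedHomogeneousComponent w d (f * g) =
      weightedHomogeneousComponent w 0 f * weightedHomogeneousComponent w d g := by
  have hcoe (p : ℕ) (φ : MvPolynomial σ R) :
      (weightedHomogeneousComponent w p φ : MvPowerSeries σ R) =
        MvPowerSeries.weightedHomogeneousComponent w p φ := by
    ext u
    simp [coeff_weightedHomogeneousComponent, MvPowerSeries.coeff_weightedHomogeneousComponent]
  have hd : (d : ℕ∞) ≤ MvPowerSeries.weightedOrder w (g : MvPowerSeries σ R) :=
    MvPowerSeries.nat_le_weightedOrder w fun u hu => by
      rw [coeff_coe]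
      exact notMem_support_iff.mp fun hmem => (hg u hmem).not_gt hu
  rw [← coe_inj, coe_mul, hcoe, hcoe, hcoe, coe_mul]
  simpa using MvPowerSeries.weightedHomogeneousComponent_mul_of_le_weightedOrder
    (f := (f : MvPowerSeries σ R)) (p := 0) (by simp) hd

end WeightedComponents

section NonZeroDivisor

variable {σ R : Type*} [CommRing R] {s : Set σ}

theorem mul_notMem_monomialSpan [NoZeroDivisors R] {B : Set (σ →₀ ℕ)}
    (hB : ∀ b ∈ B, ∀ i ∈ b.support, i ∈ s) {f g : MvPolynomial σ R} (hf0 : f ≠ 0)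
    (hf : ∀ a ∈ f.support, ∀ i ∈ s, a i = 0) (hg0 : g ≠ 0)
    (hg : ∀ u ∈ g.support, ¬∃ b ∈ B, b ≤ u) : f * g ∉ monomialSpan R B := by
  classical
  intro hfg
  obtain ⟨w, hw⟩ := support_nonempty.mpr (mul_ne_zero hf0 hg0)
  obtain ⟨a, ha, u, hu, rfl⟩ := Finset.mem_add.mp (support_mul f g hw)
  obtain ⟨b, hbB, hb⟩ := mem_monomialSpan.mp hfg _ hw
  -- `a` involves no variable of `s`, while `b` involves only variables of `s`
  refine hg u hu ⟨b, hbB, fun i => ?_⟩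
  by_cases hi : b i = 0
  · simp [hi]
  · simpa [hf a ha i (hB b hbB i (Finsupp.mem_support_iff.mpr hi))] using hb i

theorem exists_sub_mem_monomialSpan (B : Set (σ →₀ ℕ)) (x : MvPolynomial σ R) :
    ∃ y, x - y ∈ monomialSpan R B ∧ ∀ u ∈ y.support, ¬∃ b ∈ B, b ≤ u := by
  classical
  have hsupp (p : (σ →₀ ℕ) → Prop) [DecidablePred p] :
      support (R := R) (AddMonoidAlgebra.ofCoeff ((AddMonoidAlgebra.coeff x).filter p)) =
        x.support.filter p :=
    Finsupp.support_filter _ _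
  refine ⟨AddMonoidAlgebra.ofCoeff
    ((AddMonoidAlgebra.coeff x).filter fun u => ¬∃ b ∈ B, b ≤ u), ?_, fun u hu => ?_⟩
  · rw [sub_eq_iff_eq_add.mpr (by rw [← AddMonoidAlgebra.ofCoeff_add,
      Finsupp.filter_add_filter_not, AddMonoidAlgebra.ofCoeff_coeff])]
    refine mem_monomialSpan.mpr fun u hu => ?_
    rw [hsupp] at hu
    exact (Finset.mem_filter.mp hu).2
  · rw [hsupp] at hu
    exact (Finset.mem_filter.mp hu).2

theorem mem_monomialSpan_of_mul_mem [NoZeroDivisors R] {B : Set (σ →₀ ℕ)}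
    (hB : ∀ b ∈ B, ∀ i ∈ b.support, i ∈ s) {f x : MvPolynomial σ R}
    (hf : f ∉ Ideal.span (X '' s)) (hfx : f * x ∈ monomialSpan R B) :
    x ∈ monomialSpan R B := by
  obtain ⟨y, hxy, hy⟩ := exists_sub_mem_monomialSpan B x
  by_contra hx
  have hy0 : y ≠ 0 := fun hy0 => hx (by simpa [hy0] using hxy)
  have hfy : f * y ∈ monomialSpan R B := by
    simpa [mul_sub] using sub_mem hfx (Ideal.mul_mem_left _ f hxy)
  -- Grade by the degree in the variables of `s`: the component of `f * y` of the lowest degree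
  -- `d` occurring in `y` is `f₀ * y_d`, whose monomials all lie outside the ideal.
  set w : σ → ℕ := s.indicator 1
  obtain ⟨u₀, hu₀, hmin⟩ := Finset.exists_min_image y.support (Finsupp.weight w)
    (support_nonempty.mpr hy0)
  set d := Finsupp.weight w u₀
  have hmem : weightedHomogeneousComponent w 0 f * weightedHomogeneousComponent w d y ∈
      monomialSpan R B := by
    rw [← weightedHomogeneousComponent_mul_of_le_weight w f hmin]
    refine mem_monomialSpan_of_support_subset ?_ hfy
    rw [support_weightedHomogeneousComponent]
    exact Finset.filter_subset _ _
  refine mul_notMem_monomialSpan hB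
    (mt mem_span_X_image_iff_weightedHomogeneousComponent_eq_zero.mpr hf)
    (fun a ha => ?_) ?_ (fun u hu => ?_) hmem
  · rw [support_weightedHomogeneousComponent, Finset.mem_filter] at ha
    exact weight_indicator_eq_zero_iff.mp ha.2
  · rw [← support_nonempty, support_weightedHomogeneousComponent]
    exact ⟨u₀, Finset.mem_filter.mpr ⟨hu₀, rfl⟩⟩
  · rw [support_weightedHomogeneousComponent, Finset.mem_filter] at hu
    exact hy u hu.1

theorem isPrime_span_X_image [IsDomain R] (s : Set σ) :
    (Ideal.span (X '' s : Set (MvPolynomial σ R))).IsPrime := by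
  refine ⟨fun h => ?_, fun {f g} hfg => or_iff_not_imp_left.mpr fun hf => ?_⟩
  · simpa using mem_ideal_span_X_image.mp ((Ideal.eq_top_iff_one _).mp h)
  · rw [span_X_image_eq_monomialSpan] at hfg ⊢
    refine mem_monomialSpan_of_mul_mem (s := s) ?_ hf hfg
    rintro _ ⟨i, hi, rfl⟩ j hj
    obtain rfl : j = i := by simpa using hj
    exact hi

end NonZeroDivisor

theorem colon_pow_monotone {R : Type*} [CommSemiring R] (I J : Ideal R) :
    Monotone fun t : ℕ => I.colon ↑(J ^ t) :=
  fun _ _ hst => Submodule.colon_mono le_rfl (Ideal.pow_le_pow_right hst)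

section InfColon

variable {I J J₁ J₂ : Ideal (MvPolynomial (Fin n) k)}

theorem mem_infColon {f : MvPolynomial (Fin n) k} :
    f ∈ infColon I J ↔ ∃ t, ∀ g ∈ J ^ t, g * f ∈ I := by
  rw [infColon, Submodule.mem_iSup_of_directed _ (colon_pow_monotone I J).directed_le]
  simp only [Submodule.mem_colon, smul_eq_mul, mul_comm f, SetLike.mem_coe]

theorem mem_infColon_span_singleton {f g : MvPolynomial (Fin n) k} :
    f ∈ infColon I (Ideal.span {g}) ↔ ∃ t, g ^ t * f ∈ I := by
  simp only [mem_infColon, Ideal.span_singleton_pow, Ideal.mem_span_singleton']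
  refine exists_congr fun t => ⟨fun h => by simpa using h _ ⟨1, one_mul _⟩, ?_⟩
  rintro h _ ⟨a, rfl⟩
  rw [mul_assoc]
  exact I.mul_mem_left a h

theorem le_infColon (I J : Ideal (MvPolynomial (Fin n) k)) : I ≤ infColon I J :=
  fun _ hf => mem_infColon.mpr ⟨0, fun g _ => I.mul_mem_left g hf⟩

theorem exists_infColon_le_colon_pow (I J : Ideal (MvPolynomial (Fin n) k)) :
    ∃ t, infColon I J ≤ I.colon ↑(J ^ t) := by
  obtain ⟨t, ht⟩ := WellFoundedGT.monotone_chain_condition ⟨_, colon_pow_monotone I J⟩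
  exact ⟨t, iSup_le fun t' =>
    (colon_pow_monotone I J (le_max_left t' t)).trans (ht _ (le_max_right t' t)).ge⟩

theorem infColon_infColon : infColon (infColon I J₁) J₂ = infColon I (J₁ * J₂) := by
  obtain ⟨t₀, ht₀⟩ := exists_infColon_le_colon_pow I J₁
  ext f
  rw [mem_infColon, mem_infColon]
  simp only [mul_pow]
  constructor
  · rintro ⟨s, hs⟩
    refine ⟨max s t₀, fun x hx => ?_⟩
    have hle : J₁ ^ max s t₀ * J₂ ^ max s t₀ ≤ I.colon {f} := by
      refine Ideal.mul_le.mpr fun h hh g hg => Submodule.mem_colon_singleton.mpr ?_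
      have hgf := Submodule.mem_colon.mp
        (ht₀ (hs g (Ideal.pow_le_pow_right (le_max_left s t₀) hg)))
        h (Ideal.pow_le_pow_right (le_max_right s t₀) hh)
      rwa [smul_eq_mul, mul_comm, ← mul_assoc] at hgf
    simpa using Submodule.mem_colon_singleton.mp (hle hx)
  · rintro ⟨m, hm⟩
    exact ⟨m, fun g hg => mem_infColon.mpr ⟨m, fun h hh => by
      rw [← mul_assoc]
      exact hm _ (Ideal.mul_mem_mul hh hg)⟩⟩

theorem infColon_comm (I J₁ J₂ : Ideal (MvPolynomial (Fin n) k)) :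
    infColon (infColon I J₁) J₂ = infColon (infColon I J₂) J₁ := by
  rw [infColon_infColon, infColon_infColon, mul_comm]

end InfColon

theorem exists_mem_minGens_le {I : Ideal (MvPolynomial (Fin n) k)} {u : Fin n →₀ ℕ}
    (hu : monomial u (1 : k) ∈ I) : ∃ v ∈ minGens I, v ≤ u := by
  obtain ⟨v, ⟨hvI, hvu⟩, hmin⟩ := (wellFounded_lt (α := Fin n →₀ ℕ)).has_min
    {v : Fin n →₀ ℕ | monomial v (1 : k) ∈ I ∧ v ≤ u} ⟨u, hu, le_rfl⟩
  exact ⟨v, ⟨hvI, fun v' hv'I hv'v => by_contra fun hne =>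
    hmin v' ⟨hv'I, hv'v.trans hvu⟩ (lt_of_le_of_ne hv'v hne)⟩, hvu⟩

theorem IsMonomialIdeal.eq_monomialSpan_minGens {I : Ideal (MvPolynomial (Fin n) k)}
    (hI : IsMonomialIdeal I) : I = monomialSpan k (minGens I) := by
  obtain ⟨A, rfl⟩ := hI
  refine le_antisymm (Ideal.span_le.mpr ?_) (Ideal.span_le.mpr ?_)
  · rintro _ ⟨a, ha, rfl⟩
    have haI : monomial a (1 : k) ∈ Ideal.span ((fun u => monomial u (1 : k)) '' A) :=
      Ideal.subset_span ⟨a, ha, rfl⟩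
    obtain ⟨v, hv, hva⟩ := exists_mem_minGens_le haI
    exact monomial_mem_monomialSpan.mpr ⟨v, hv, hva⟩
  · rintro _ ⟨v, hv, rfl⟩
    exact hv.1

theorem minGens_monomialSpan_subset (A : Set (Fin n →₀ ℕ)) :
    minGens (monomialSpan k A) ⊆ A := by
  intro v hv
  obtain ⟨a, ha, hav⟩ := monomial_mem_monomialSpan.mp hv.1
  rwa [← hv.2 a (monomial_mem_monomialSpan.mpr ⟨a, ha, le_rfl⟩) hav]

theorem infColon_monomialSpan_X (A : Set (Fin n →₀ ℕ)) (j : Fin n) :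
    infColon (monomialSpan k A) (Ideal.span {X j}) = monomialSpan k ((·.erase j) '' A) := by
  apply le_antisymm
  · intro f hf
    obtain ⟨t, ht⟩ := mem_infColon_span_singleton.mp hf
    refine mem_monomialSpan.mpr fun u hu => ?_
    have hcoeff :
        coeff (Finsupp.single j t + u) ((X j : MvPolynomial (Fin n) k) ^ t * f) ≠ 0 := by
      rwa [X_pow_eq_monomial, coeff_monomial_mul, one_mul, ← mem_support_iff]
    obtain ⟨a, ha, hau⟩ := mem_monomialSpan.mp ht _ (mem_support_iff.mpr hcoeff)
    refine ⟨a.erase j, ⟨a, ha, rfl⟩, fun i => ?_⟩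
    rcases eq_or_ne i j with rfl | hij
    · simp
    · simpa [Finsupp.erase_ne hij, Finsupp.single_apply, hij.symm] using hau i
  · refine Ideal.span_le.mpr ?_
    rintro _ ⟨_, ⟨a, ha, rfl⟩, rfl⟩
    refine mem_infColon_span_singleton.mpr ⟨a j, ?_⟩
    rw [X_pow_eq_monomial, monomial_mul, one_mul, Finsupp.single_add_erase]
    exact Ideal.subset_span ⟨a, ha, rfl⟩

theorem IsMonomialIdeal.infColon_X {I : Ideal (MvPolynomial (Fin n) k)} (hI : IsMonomialIdeal I)
    (j : Fin n) :
    infColon I (Ideal.span {X j}) = monomialSpan k ((·.erase j) '' minGens I) := by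
  conv_lhs => rw [hI.eq_monomialSpan_minGens]
  exact infColon_monomialSpan_X _ j

theorem span_setOf_X_le (i : Fin n) :
    Ideal.span {f | ∃ j ≤ i, f = X j} =
      Ideal.span (X '' Set.Iic i : Set (MvPolynomial (Fin n) k)) := by
  congr 1
  ext f
  simp [eq_comm]

theorem IsBorelType.infColon_X {I : Ideal (MvPolynomial (Fin n) k)} (hB : IsBorelType I)
    (j : Fin n) : IsBorelType (infColon I (Ideal.span {X j})) := by
  intro i
  rw [infColon_comm, hB i, infColon_comm]

section AssociatedPrimes

variable {R : Type*} [CommRing R]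

theorem mem_colon_bot_quotient_mk {I : Ideal R} {g x : R} :
    g ∈ (⊥ : Submodule R (R ⧸ I)).colon {Ideal.Quotient.mk I x} ↔ g * x ∈ I := by
  rw [Submodule.mem_colon_singleton, Algebra.smul_def, Ideal.Quotient.algebraMap_eq, ← map_mul,
    Submodule.mem_bot, Ideal.Quotient.eq_zero_iff_mem]

theorem associatedPrimes_quotient_subset {I J : Ideal R} (hIJ : I ≤ J) :
    associatedPrimes R (R ⧸ I) ⊆
      associatedPrimes R (Submodule.map I.mkQ J) ∪ associatedPrimes R (R ⧸ J) := by
  have := associatedPrimes.subset_union_of_exact (R := R)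
    (Submodule.injective_subtype (Submodule.map I.mkQ J))
    (LinearMap.exact_subtype_mkQ _)
  rwa [LinearEquiv.AssociatedPrimes.eq (Submodule.quotientQuotientEquivQuotient I J hIJ)] at this

theorem mem_associatedPrimes_of_forall_pow_mul_mem [IsNoetherianRing R] {I J p : Ideal R} {y : R}
    (hIJ : I ≤ J) (hJ : ∀ h ∈ J, ∃ t, y ^ t * h ∈ I) (hy : y ∉ p)
    (hp : p ∈ associatedPrimes R (R ⧸ J)) : p ∈ associatedPrimes R (R ⧸ I) := by
  obtain ⟨hprime, x', rfl⟩ := isAssociatedPrime_iff.mp hp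
  obtain ⟨x, rfl⟩ := Ideal.Quotient.mk_surjective x'
  have hmono : Monotone fun t : ℕ => I.colon {y ^ t * x} := by
    intro t t' htt' g hg
    obtain ⟨d, rfl⟩ := Nat.exists_eq_add_of_le htt'
    rw [Submodule.mem_colon_singleton, smul_eq_mul] at hg ⊢
    convert I.mul_mem_left (y ^ d) hg using 1
    ring
  -- The annihilators of `y ^ t * x` modulo `I` increase with `t`; once stable they equal `p`.
  obtain ⟨T, hT⟩ := WellFoundedGT.monotone_chain_condition ⟨_, hmono⟩
  change ∀ m, T ≤ m → I.colon {y ^ T * x} = I.colon {y ^ m * x} at hT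
  refine isAssociatedPrime_iff.mpr ⟨hprime, Ideal.Quotient.mk I (y ^ T * x), ?_⟩
  ext g
  rw [mem_colon_bot_quotient_mk, mem_colon_bot_quotient_mk]
  constructor
  · intro hg
    obtain ⟨t, ht⟩ := hJ _ hg
    have hgt : g ∈ I.colon {y ^ t * x} := by
      rw [Submodule.mem_colon_singleton, smul_eq_mul]
      convert ht using 1
      ring
    have hgT : g ∈ I.colon {y ^ max t T * x} := hmono (le_max_left t T) hgt
    rwa [← hT (max t T) (le_max_right t T), Submodule.mem_colon_singleton] at hgT
  · intro hg
    have hgy : g * y ^ T ∈ (⊥ : Submodule R (R ⧸ J)).colon {Ideal.Quotient.mk J x} := by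
      rw [mem_colon_bot_quotient_mk, mul_assoc]
      exact hIJ hg
    refine mem_colon_bot_quotient_mk.mp ((hprime.mem_or_mem hgy).resolve_right ?_)
    exact fun h => hy (hprime.mem_of_pow_mem T h)

end AssociatedPrimes

section MonomialLayer

variable {σ R : Type*} [CommRing R] [IsDomain R] {s : Set σ} {B : Set (σ →₀ ℕ)}
  {J' : Ideal (MvPolynomial σ R)} {t : ℕ}

theorem associatedPrimes_map_mkQ_subset (hB : ∀ b ∈ B, ∀ i ∈ b.support, i ∈ s)
    (hJ' : J' ≤ (monomialSpan R B).colon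
      ↑(Ideal.span (X '' s) ^ t : Ideal (MvPolynomial σ R))) :
    associatedPrimes (MvPolynomial σ R) (Submodule.map (monomialSpan R B).mkQ J') ⊆
      {Ideal.span (X '' s)} := by
  rintro p ⟨hp, y, rfl⟩
  obtain ⟨x, hxJ', hxy⟩ := Submodule.mem_map.mp y.2
  have hmem (g : MvPolynomial σ R) :
      g ∈ (⊥ : Submodule _ (Submodule.map (monomialSpan R B).mkQ J')).colon {y} ↔
        g * x ∈ monomialSpan R B := by
    rw [Submodule.mem_colon_singleton, Submodule.mem_bot, ← ZeroMemClass.coe_eq_zero,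
      Submodule.coe_smul, ← hxy, ← map_smul, Submodule.mkQ_apply,
      Submodule.Quotient.mk_eq_zero, smul_eq_mul]
  have hP := isPrime_span_X_image (R := R) s
  refine le_antisymm ((Ideal.radical_mono fun g hg => ?_).trans_eq hP.radical) fun g hg => ?_
  · by_contra hgP
    have hx := mem_monomialSpan_of_mul_mem hB hgP ((hmem g).mp hg)
    exact hp.ne_top ((Ideal.eq_top_iff_one _).mpr (Ideal.le_radical ((hmem 1).mpr (by simpa))))
  · refine ⟨t, (hmem _).mpr ?_⟩
    simpa [mul_comm] using Submodule.mem_colon.mp (hJ' hxJ') _ (Ideal.pow_mem_pow hg t)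

theorem span_X_image_mem_associatedPrimes [Finite σ] [IsNoetherianRing R]
    (hB : ∀ b ∈ B, ∀ i ∈ b.support, i ∈ s)
    (hJ' : J' ≤ (monomialSpan R B).colon ↑(Ideal.span (X '' s) ^ t : Ideal (MvPolynomial σ R)))
    (hJ'B : ¬J' ≤ monomialSpan R B) :
    Ideal.span (X '' s) ∈
      associatedPrimes (MvPolynomial σ R) (MvPolynomial σ R ⧸ monomialSpan R B) := by
  have : Nontrivial (Submodule.map (monomialSpan R B).mkQ J') := by
    rw [Submodule.nontrivial_iff_ne_bot, ne_eq, ← le_bot_iff, Submodule.map_le_iff_le_comap,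
      Submodule.comap_bot, Submodule.ker_mkQ]
    exact hJ'B
  obtain ⟨p, hp⟩ :=
    associatedPrimes.nonempty (MvPolynomial σ R) (Submodule.map (monomialSpan R B).mkQ J')
  rw [← associatedPrimes_map_mkQ_subset hB hJ' hp]
  exact associatedPrimes.subset_of_injective (Submodule.injective_subtype _) hp

end MonomialLayer

-- `nl l` is the index of the variable `x_{m(c l)}`, counted from `0` in `Fin n`.
structure IsSequentialChain (I : Ideal (MvPolynomial (Fin n) k)) (r : ℕ)
    (c : ℕ → Ideal (MvPolynomial (Fin n) k)) (nl : ℕ → Fin n) : Prop where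
  zero : c 0 = I
  last : c r = ⊤
  le_of_mem_support : ∀ l < r, ∀ u ∈ minGens (c l), ∀ i ∈ u.support, i ≤ nl l
  exists_mem_support : ∀ l < r, ∃ u ∈ minGens (c l), nl l ∈ u.support
  succ : ∀ l < r, c (l + 1) = infColon (c l) (Ideal.span {X (nl l)})

namespace IsSequentialChain

variable {I : Ideal (MvPolynomial (Fin n) k)} {r : ℕ} {c : ℕ → Ideal (MvPolynomial (Fin n) k)}
  {nl : ℕ → Fin n}

theorem isMonomialIdeal (hc : IsSequentialChain I r c nl) (hI : IsMonomialIdeal I) :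
    ∀ l ≤ r, IsMonomialIdeal (c l)
  | 0, _ => hc.zero ▸ hI
  | l + 1, hl => ⟨_, (hc.succ l hl).trans ((hc.isMonomialIdeal hI l (by omega)).infColon_X _)⟩

theorem isBorelType (hc : IsSequentialChain I r c nl) (hB : IsBorelType I) :
    ∀ l ≤ r, IsBorelType (c l)
  | 0, _ => hc.zero ▸ hB
  | l + 1, hl => hc.succ l hl ▸ (hc.isBorelType hB l (by omega)).infColon_X _

theorem le_succ (hc : IsSequentialChain I r c nl) {l : ℕ} (hl : l < r) : c l ≤ c (l + 1) :=
  hc.succ l hl ▸ le_infColon _ _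

theorem base_le (hc : IsSequentialChain I r c nl) : ∀ l ≤ r, I ≤ c l
  | 0, _ => hc.zero.ge
  | l + 1, hl => (hc.base_le l (by omega)).trans (hc.le_succ hl)

theorem exists_pow_mul_mem (hc : IsSequentialChain I r c nl) :
    ∀ l ≤ r, ∀ h ∈ c l, ∃ t, (∏ j ∈ Finset.range l, X (nl j)) ^ t * h ∈ I
  | 0, _, h, hh => ⟨0, by simpa [hc.zero] using hh⟩
  | l + 1, hl, h, hh => by
    obtain ⟨s, hs⟩ := mem_infColon_span_singleton.mp (hc.succ l hl ▸ hh)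
    obtain ⟨t, ht⟩ := hc.exists_pow_mul_mem l (by omega) _ hs
    refine ⟨t + s, ?_⟩
    convert I.mul_mem_left ((∏ j ∈ Finset.range l, X (nl j)) ^ s * X (nl l) ^ t) ht using 1
    rw [Finset.prod_range_succ]
    ring

theorem minGens_succ_subset (hc : IsSequentialChain I r c nl) (hI : IsMonomialIdeal I) {l : ℕ}
    (hl : l < r) : minGens (c (l + 1)) ⊆ (·.erase (nl l)) '' minGens (c l) := by
  rw [hc.succ l hl, (hc.isMonomialIdeal hI l hl.le).infColon_X]
  exact minGens_monomialSpan_subset _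

theorem nl_succ_lt (hc : IsSequentialChain I r c nl) (hI : IsMonomialIdeal I) {l : ℕ}
    (hl : l + 1 < r) : nl (l + 1) < nl l := by
  obtain ⟨v, hv, hvs⟩ := hc.exists_mem_support (l + 1) hl
  obtain ⟨u, hu, rfl⟩ := hc.minGens_succ_subset hI (by omega) hv
  rw [Finsupp.support_erase, Finset.mem_erase] at hvs
  exact lt_of_le_of_ne (hc.le_of_mem_support l (by omega) u hu _ hvs.2) hvs.1

theorem nl_lt_nl (hc : IsSequentialChain I r c nl) (hI : IsMonomialIdeal I) {j : ℕ} :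
    ∀ {l}, j < l → l < r → nl l < nl j
  | 0, hjl, _ => absurd hjl (Nat.not_lt_zero j)
  | l + 1, hjl, hl => by
    rcases Nat.lt_succ_iff_lt_or_eq.mp hjl with hjl | rfl
    · exact (hc.nl_succ_lt hI hl).trans (hc.nl_lt_nl hI hjl (by omega))
    · exact hc.nl_succ_lt hI hl

theorem length_le (hc : IsSequentialChain I r c nl) (hI : IsMonomialIdeal I) : r ≤ n := by
  have hanti : StrictAnti fun l : Fin r => nl l := fun a b hab => hc.nl_lt_nl hI hab b.2
  simpa using Fintype.card_le_of_injective _ hanti.injective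

theorem exists_le_colon_pow (hc : IsSequentialChain I r c nl) (hB : IsBorelType I) {l : ℕ}
    (hl : l < r) : ∃ t, c (l + 1) ≤
      (c l).colon ↑(Ideal.span (X '' Set.Iic (nl l)) ^ t : Ideal (MvPolynomial (Fin n) k)) := by
  rw [hc.succ l hl, ← hc.isBorelType hB l hl.le (nl l), span_setOf_X_le]
  exact exists_infColon_le_colon_pow _ _

theorem associatedPrimes_subset (hc : IsSequentialChain I r c nl) (hI : IsMonomialIdeal I)
    (hB : IsBorelType I) (l : ℕ) (hl : l ≤ r) :
    associatedPrimes (MvPolynomial (Fin n) k) (MvPolynomial (Fin n) k ⧸ c l) ⊆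
      {P | ∃ j, l ≤ j ∧ j < r ∧ P = Ideal.span (X '' Set.Iic (nl j))} := by
  rcases hl.lt_or_eq with hlr | rfl
  · intro p hp
    rcases associatedPrimes_quotient_subset (hc.le_succ hlr) hp with hp | hp
    · obtain ⟨t, ht⟩ := hc.exists_le_colon_pow hB hlr
      rw [(hc.isMonomialIdeal hI l hlr.le).eq_monomialSpan_minGens] at hp ht
      exact ⟨l, le_rfl, hlr, associatedPrimes_map_mkQ_subset (hc.le_of_mem_support l hlr) ht hp⟩
    · obtain ⟨j, hj, hjr, rfl⟩ := hc.associatedPrimes_subset hI hB (l + 1) hlr hp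
      exact ⟨j, by omega, hjr, rfl⟩
  · rw [hc.last, associatedPrimes.eq_empty_of_subsingleton]
    exact Set.empty_subset _
termination_by r - l

theorem not_succ_le (hc : IsSequentialChain I r c nl) {l : ℕ} (hl : l < r) :
    ¬c (l + 1) ≤ c l := by
  obtain ⟨u, hu, hus⟩ := hc.exists_mem_support l hl
  intro hle
  have hmem : monomial (u.erase (nl l)) (1 : k) ∈ c (l + 1) := by
    rw [hc.succ l hl]
    refine mem_infColon_span_singleton.mpr ⟨u (nl l), ?_⟩
    rw [X_pow_eq_monomial, monomial_mul, one_mul, Finsupp.single_add_erase]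
    exact hu.1
  have hle' : u.erase (nl l) ≤ u := by
    conv_rhs => rw [← Finsupp.single_add_erase (nl l) u]
    exact le_add_self
  have heq := hu.2 _ (hle hmem) hle'
  exact Finsupp.mem_support_iff.mp hus (by rw [← heq, Finsupp.erase_same])

theorem span_X_mem_associatedPrimes_self (hc : IsSequentialChain I r c nl)
    (hI : IsMonomialIdeal I) (hB : IsBorelType I) {l : ℕ} (hl : l < r) :
    Ideal.span (X '' Set.Iic (nl l)) ∈
      associatedPrimes (MvPolynomial (Fin n) k) (MvPolynomial (Fin n) k ⧸ c l) := by
  obtain ⟨t, ht⟩ := hc.exists_le_colon_pow hB hl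
  have hne := hc.not_succ_le hl
  rw [(hc.isMonomialIdeal hI l hl.le).eq_monomialSpan_minGens] at ht hne ⊢
  exact span_X_image_mem_associatedPrimes (hc.le_of_mem_support l hl) ht hne

theorem span_X_mem_associatedPrimes (hc : IsSequentialChain I r c nl)
    (hI : IsMonomialIdeal I) (hB : IsBorelType I) {l : ℕ} (hl : l < r) :
    Ideal.span (X '' Set.Iic (nl l)) ∈
      associatedPrimes (MvPolynomial (Fin n) k) (MvPolynomial (Fin n) k ⧸ I) := by
  refine mem_associatedPrimes_of_forall_pow_mul_mem (hc.base_le l hl.le)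
    (hc.exists_pow_mul_mem l hl.le)
    (fun hmem => ?_) (hc.span_X_mem_associatedPrimes_self hI hB hl)
  obtain ⟨j, hj, hXj⟩ := (isPrime_span_X_image _).prod_mem_iff.mp hmem
  exact (X_mem_span_X_image_iff.mp hXj).not_gt (hc.nl_lt_nl hI (Finset.mem_range.mp hj) hl)

end IsSequentialChain

theorem sequential_chain_associated_primes_general
    {k : Type} [Field k] {n : ℕ} (I : Ideal (MvPolynomial (Fin n) k))
    (hI : IsMonomialIdeal I) (hB : IsBorelType I)
    (r : ℕ) (c : ℕ → Ideal (MvPolynomial (Fin n) k)) (nl : ℕ → Fin n)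
    (h0 : c 0 = I) (hr : c r = ⊤)
    (hnl : ∀ l, l < r →
      (∀ u ∈ minGens (c l), ∀ i ∈ u.support, i ≤ nl l) ∧
      (∃ u ∈ minGens (c l), nl l ∈ u.support))
    (hstep : ∀ l, l < r → c (l + 1) = infColon (c l) (Ideal.span {(X (nl l) : MvPolynomial (Fin n) k)})) :
    r ≤ n ∧ (∀ l, l + 1 < r → nl (l + 1) < nl l) ∧
    associatedPrimes (MvPolynomial (Fin n) k) ((MvPolynomial (Fin n) k) ⧸ I) =
      {P | ∃ l, l < r ∧ P = Ideal.span {f | ∃ j ≤ nl l, f = (X j : MvPolynomial (Fin n) k)}} := by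
  have hc : IsSequentialChain I r c nl :=
    ⟨h0, hr, fun l hl => (hnl l hl).1, fun l hl => (hnl l hl).2, hstep⟩
  refine ⟨hc.length_le hI, fun l hl => hc.nl_succ_lt hI hl, ?_⟩
  simp_rw [span_setOf_X_le]
  refine subset_antisymm (fun p hp => ?_) ?_
  · obtain ⟨j, -, hj, rfl⟩ := hc.associatedPrimes_subset hI hB 0 r.zero_le (hc.zero ▸ hp)
    exact ⟨j, hj, rfl⟩
  · rintro _ ⟨l, hl, rfl⟩
    exact hc.span_X_mem_associatedPrimes hI hB hl

/-- The sequential chain of a Borel type monomial ideal has length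
`≤ n`, strictly decreasing `n_l`, and `Ass(S/I) = {(x_1,…,x_{n_l}) : l < r}`. -/
theorem sequential_chain_associated_primes
    {k : Type} [Field k] {n : ℕ} (I : Ideal (MvPolynomial (Fin n) k))
    (hI : IsMonomialIdeal I) (hB : IsBorelType I)
    (r : ℕ) (c : ℕ → Ideal (MvPolynomial (Fin n) k)) (nl : ℕ → Fin n)
    (h0 : c 0 = I) (hr : c r = ⊤) (hproper : ∀ l, l < r → c l ≠ ⊤)
    (hnl : ∀ l, l < r →
      (∀ u ∈ minGens (c l), ∀ i ∈ u.support, i ≤ nl l) ∧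
      (∃ u ∈ minGens (c l), nl l ∈ u.support))
    (hstep : ∀ l, l < r → c (l + 1) = infColon (c l) (Ideal.span {(X (nl l) : MvPolynomial (Fin n) k)})) :
    r ≤ n ∧ (∀ l, l + 1 < r → nl (l + 1) < nl l) ∧
    associatedPrimes (MvPolynomial (Fin n) k) ((MvPolynomial (Fin n) k) ⧸ I) =
      {P | ∃ l, l < r ∧ P = Ideal.span {f | ∃ j ≤ nl l, f = (X j : MvPolynomial (Fin n) k)}} :=
  sequential_chain_associated_primes_general I hI hB r c nl h0 hr hnl hstep

end
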